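/- arXiv:1810.08001 — 2 statements merged into one kernel-verified Lean document; each statement's English description precedes it below -/
import Mathlib

section
/- Let q ∈ (0,1) with q + q^{-1} = N ≥ 3, and define the quantum factorial [n]_q! = [n]_q [n-1]_q ⋯ [1]_q. For integers a > b ≥ 1, there is a constant C (depending on a, b) such that |[a]_q! / ([b]_q! [a-b]_q! N^{b(a-b)}) - 1| ≤ C/N² for all N ≥ 3. -/
/-!
With `x = q²` and `N = q + q⁻¹ = (1 + x)/q`, the powers of `q` cancel and the ratio becomes
`∏_{j<a-b} (1 - x^(b+j+1)) / ((1 - x^(j+1)) (1 + x)^b)`. Each factor lies between `(1 - x)^(b+1)`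
and `(1 - x)⁻¹`, so by Bernoulli's inequality the product is `1 + O(x)`, and `x ≤ 4/N²`.
-/

/-- Quantum integer `[k]_q = (q^{-k} - q^k)/(q^{-1} - q)`. -/
noncomputable def qint (q : ℝ) (k : ℕ) : ℝ := (q⁻¹ ^ k - q ^ k) / (q⁻¹ - q)

/-- Quantum factorial `[n]_q! = [n]_q [n-1]_q ⋯ [1]_q`. -/
noncomputable def qfact (q : ℝ) (n : ℕ) : ℝ := ∏ j ∈ Finset.range n, qint q (j + 1)

/-- The quantum parameter `q = (2/N)/(1 + √(1-4/N²))`, the solution of `q + q⁻¹ = N` in `(0,1)`. -/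
noncomputable def qpar (N : ℝ) : ℝ := (2 / N) / (1 + Real.sqrt (1 - 4 / N ^ 2))

open Finset

lemma qpar_pos {N : ℝ} (hN : 0 < N) : 0 < qpar N := by
  unfold qpar
  positivity

lemma qpar_le {N : ℝ} (hN : 0 < N) : qpar N ≤ 2 / N :=
  div_le_self (by positivity) (by linarith [Real.sqrt_nonneg (1 - 4 / N ^ 2)])

lemma qpar_add_inv {N : ℝ} (hN : 2 ≤ N) : qpar N + (qpar N)⁻¹ = N := by
  have hN0 : 0 < N := by linarith
  have hs : Real.sqrt (1 - 4 / N ^ 2) ^ 2 = 1 - 4 / N ^ 2 :=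
    Real.sq_sqrt (by rw [sub_nonneg, div_le_one (by positivity)]; nlinarith)
  unfold qpar
  field_simp
  field_simp at hs
  linear_combination hs

noncomputable def gaussianFactor (x : ℝ) (b j : ℕ) : ℝ :=
  (1 - x ^ (b + j + 1)) / ((1 - x ^ (j + 1)) * (1 + x) ^ b)

section QuantumIntegers

variable {q : ℝ}

lemma qint_succ (hq : q ≠ 0) (n : ℕ) :
    qint q (n + 1) = (1 - (q ^ 2) ^ (n + 1)) / (q ^ n * (1 - q ^ 2)) := by
  rw [qint, inv_pow, ← mul_div_mul_right _ _ (pow_ne_zero (n + 1) hq)]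
  congr 1 <;> field_simp <;> ring

lemma qint_succ_pos (hq0 : 0 < q) (hq1 : q < 1) (n : ℕ) : 0 < qint q (n + 1) := by
  have hx : (q ^ 2) ^ (n + 1) < 1 := pow_lt_one₀ (by positivity) (by nlinarith) (by omega)
  rw [qint_succ hq0.ne']
  exact div_pos (by linarith) (mul_pos (by positivity) (by nlinarith))

lemma qfact_pos (hq0 : 0 < q) (hq1 : q < 1) (n : ℕ) : 0 < qfact q n :=
  prod_pos fun j _ => qint_succ_pos hq0 hq1 j

lemma qfact_add_div_eq_prod (c : ℝ) (b k : ℕ) (hb : qfact q b ≠ 0) :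
    qfact q (b + k) / (qfact q b * qfact q k * c ^ (b * k)) =
      ∏ j ∈ range k, qint q (b + j + 1) / (qint q (j + 1) * c ^ b) := by
  unfold qfact at hb ⊢
  rw [prod_div_distrib, prod_mul_distrib, prod_const, card_range, ← pow_mul, prod_range_add,
    mul_assoc, mul_div_mul_left _ _ hb]

lemma qint_add_div (hq0 : 0 < q) (hq1 : q < 1) (b j : ℕ) :
    qint q (b + j + 1) / (qint q (j + 1) * (q + q⁻¹) ^ b) =
      gaussianFactor (q ^ 2) b j := by
  have hx : (q ^ 2) ^ (j + 1) < 1 := pow_lt_one₀ (by positivity) (by nlinarith) (by omega)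
  have hxj : 1 - (q ^ 2) ^ (j + 1) ≠ 0 := by linarith
  have hq2 : 1 - q ^ 2 ≠ 0 := by nlinarith
  have hsum : q + q⁻¹ = (1 + q ^ 2) / q := by field_simp; ring
  rw [gaussianFactor, qint_succ hq0.ne', qint_succ hq0.ne', hsum, div_pow]
  field_simp
  ring

end QuantumIntegers

lemma one_sub_mul_le_one_sub_pow {x : ℝ} (hx : x ≤ 2) (n : ℕ) : 1 - n * x ≤ (1 - x) ^ n := by
  simpa [sub_eq_add_neg] using one_add_mul_le_pow (a := -x) (by linarith) n

lemma inv_one_sub_pow_le {x t : ℝ} (hx : 0 ≤ x) (hxt : x ≤ t) (ht : t < 1) (n : ℕ) :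
    (1 - x)⁻¹ ^ n ≤ 1 + n * x / (1 - t) ^ n := by
  have ht0 : 0 < (1 - t) ^ n := pow_pos (by linarith) n
  have hle : (1 - t) ^ n ≤ (1 - x) ^ n := pow_le_pow_left₀ (by linarith) (by linarith) n
  have hscale : n * x ≤ n * x / (1 - t) ^ n * (1 - x) ^ n := by
    rw [div_mul_eq_mul_div, le_div_iff₀ ht0]
    exact mul_le_mul_of_nonneg_left hle (by positivity)
  rw [inv_pow, inv_le_iff_one_le_mul₀ (ht0.trans_le hle)]
  nlinarith [one_sub_mul_le_one_sub_pow (by linarith : x ≤ 2) n]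

section GaussianFactor

variable {x : ℝ}

lemma one_sub_pow_le_gaussianFactor (hx0 : 0 ≤ x) (hx1 : x < 1) (b j : ℕ) :
    (1 - x) ^ (b + 1) ≤ gaussianFactor x b j := by
  have hxj : x ^ (j + 1) ≤ x := pow_le_of_le_one hx0 hx1.le (by omega)
  have hxbj : x ^ (b + j + 1) ≤ x := pow_le_of_le_one hx0 hx1.le (by omega)
  have hxj0 : 0 ≤ x ^ (j + 1) := by positivity
  rw [gaussianFactor, le_div_iff₀ (mul_pos (by linarith) (by positivity))]
  calc (1 - x) ^ (b + 1) * ((1 - x ^ (j + 1)) * (1 + x) ^ b)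
      ≤ (1 - x) ^ (b + 1) * (1 + x) ^ b :=
        mul_le_mul_of_nonneg_left (mul_le_of_le_one_left (by positivity) (by linarith))
          (pow_nonneg (by linarith) _)
    _ = (1 - x) * (1 - x ^ 2) ^ b := by
        rw [show 1 - x ^ 2 = (1 - x) * (1 + x) by ring, mul_pow]
        ring
    _ ≤ 1 - x := mul_le_of_le_one_right (by linarith) (pow_le_one₀ (by nlinarith) (by nlinarith))
    _ ≤ 1 - x ^ (b + j + 1) := by linarith

lemma gaussianFactor_le_inv_one_sub (hx0 : 0 ≤ x) (hx1 : x < 1) (b j : ℕ) :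
    gaussianFactor x b j ≤ (1 - x)⁻¹ := by
  rw [gaussianFactor]
  have hxj : x ^ (j + 1) ≤ x := pow_le_of_le_one hx0 hx1.le (by omega)
  have hxbj : 0 ≤ x ^ (b + j + 1) := by positivity
  have hb : 1 ≤ (1 + x) ^ b := one_le_pow₀ (by linarith)
  rw [div_le_iff₀ (mul_pos (by linarith) (by positivity)), ← div_eq_inv_mul,
    le_div_iff₀ (by linarith)]
  nlinarith

lemma abs_prod_gaussianFactor_sub_one_le {t : ℝ} (hx0 : 0 ≤ x) (hxt : x ≤ t) (ht : t < 1)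
    (b k : ℕ) :
    |∏ j ∈ range k, gaussianFactor x b j - 1| ≤
      (b + 1) * k / (1 - t) ^ k * x := by
  have hx1 : x < 1 := hxt.trans_lt ht
  have hlow := one_sub_pow_le_gaussianFactor hx0 hx1 b
  have hprod_ge : (1 - x) ^ ((b + 1) * k) ≤
      ∏ j ∈ range k, gaussianFactor x b j := by
    calc (1 - x) ^ ((b + 1) * k) = ∏ _j ∈ range k, (1 - x) ^ (b + 1) := by
          rw [prod_const, card_range, pow_mul]
      _ ≤ _ := prod_le_prod (fun _ _ => pow_nonneg (by linarith) _) fun j _ => hlow j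
  have hprod_le : ∏ j ∈ range k, gaussianFactor x b j ≤
      (1 - x)⁻¹ ^ k := by
    calc _ ≤ ∏ _j ∈ range k, (1 - x)⁻¹ :=
          prod_le_prod (fun j _ => (pow_nonneg (by linarith) _).trans (hlow j))
            fun j _ => gaussianFactor_le_inv_one_sub hx0 hx1 b j
      _ = (1 - x)⁻¹ ^ k := by rw [prod_const, card_range]
  have hbern := one_sub_mul_le_one_sub_pow (by linarith : x ≤ 2) ((b + 1) * k)
  have hinv := inv_one_sub_pow_le hx0 hxt ht k
  have hscale : (b + 1) * k * x ≤ (b + 1) * k / (1 - t) ^ k * x := by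
    rw [div_mul_eq_mul_div]
    exact le_div_self (by positivity) (pow_pos (by linarith) k)
      (pow_le_one₀ (by linarith) (by linarith))
  have hk : k * x / (1 - t) ^ k ≤ (b + 1) * k / (1 - t) ^ k * x := by
    rw [div_mul_eq_mul_div]
    gcongr
    exact le_mul_of_one_le_left k.cast_nonneg (by simp)
  push_cast at hbern
  rw [abs_le]
  constructor <;> linarith

end GaussianFactor

theorem stmt_4_general (a b : ℕ) (hab : b < a) :
    ∃ C : ℝ, ∀ N : ℕ, 3 ≤ N →
      |qfact (qpar N) a /
          (qfact (qpar N) b * qfact (qpar N) (a - b) * (N : ℝ) ^ (b * (a - b))) - 1|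
        ≤ C / (N : ℝ) ^ 2 := by
  obtain ⟨k, rfl⟩ : ∃ k, a = b + k := ⟨a - b, by omega⟩
  refine ⟨(b + 1) * k / (1 - 4 / 9) ^ k * 4, fun N hN => ?_⟩
  have hN3 : (3 : ℝ) ≤ N := by exact_mod_cast hN
  have hN0 : (0 : ℝ) < N := by linarith
  set q := qpar N
  have hq0 : 0 < q := qpar_pos hN0
  have hx : q ^ 2 ≤ 4 / N ^ 2 := by
    calc q ^ 2 ≤ (2 / N) ^ 2 := pow_le_pow_left₀ hq0.le (qpar_le hN0) 2
      _ = 4 / N ^ 2 := by ring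
  have hx49 : 4 / (N : ℝ) ^ 2 ≤ 4 / 9 := by gcongr; nlinarith
  have hq1 : q < 1 := by nlinarith
  have hN : (N : ℝ) ^ (b * k) = (q + q⁻¹) ^ (b * k) := by rw [qpar_add_inv (by linarith)]
  rw [Nat.add_sub_cancel_left, hN, qfact_add_div_eq_prod _ b k (qfact_pos hq0 hq1 b).ne']
  simp_rw [qint_add_div hq0 hq1]
  calc _ ≤ (b + 1) * k / (1 - 4 / 9) ^ k * q ^ 2 :=
        abs_prod_gaussianFactor_sub_one_le (sq_nonneg q) (hx.trans hx49) (by norm_num) b k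
    _ ≤ (b + 1) * k / (1 - 4 / 9) ^ k * (4 / N ^ 2) := by gcongr
    _ = _ := by ring

theorem stmt_4 (a b : ℕ) (hb : 1 ≤ b) (hab : b < a) :
    ∃ C : ℝ, ∀ N : ℕ, 3 ≤ N →
      |qfact (qpar N) a /
          (qfact (qpar N) b * qfact (qpar N) (a - b) * (N : ℝ) ^ (b * (a - b))) - 1|
        ≤ C / (N : ℝ) ^ 2 :=
  stmt_4_general a b hab
end

section
/- Define highest-weight Clebsch-Gordan coefficients C^{l,m,l+m}_{j₁,j₂,j} = δ_{j₁+j₂,j} √(l! m! / (l+m)!) · √(j! (l+m-j)! / (j₁! j₂! (l-j₁)! (m-j₂)!)) for 0 ≤ j₁ ≤ l, 0 ≤ j₂ ≤ m, 0 ≤ j ≤ l+m. Then for all valid i, j, s₂ (with l ≥ m): Σ_{i₂} C^{l,m,l+m}_{i-i₂,i₂,i} C^{l,m,l+m}_{j-i₂,i₂,j} C^{l-m,m,l}_{i-i₂-s₂,s₂,i-i₂} C^{l-m,m,l}_{i-i₂-s₂,s₂+j-i,j-i₂} = C^{l,m,l+m}_{i-s₂,s₂,i} C^{l,m,l+m}_{i-s₂,s₂+j-i,j},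 where i₂ ranges over max{0, i-s₂-l+m} ≤ i₂ ≤ min{m, i-s₂}. -/
/-! Put `k = i - s₂`. For each `i₂` in the range, squaring the summand shows that all factorials
cancel except a hypergeometric weight: the summand equals the right-hand side times
`C(m, i₂) C(l - m, k - i₂) / C(l, k)`. These weights sum to `1` by Chu–Vandermonde. When `k ∉ [0, l]`
the sum is empty and the right-hand side vanishes. -/

/-- Highest-weight Clebsch-Gordan coefficient `C^{l,m,l+m}_{j₁,j₂,j}`, given by the explicit
factorial formula, and set to `0` outside the allowed index range (in particular when a
factorial argument would be negative). -/
noncomputable def CGhw (l m : ℕ) (j₁ j₂ j : ℤ) : ℝ :=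
  if j₁ + j₂ = j ∧ 0 ≤ j₁ ∧ j₁ ≤ (l : ℤ) ∧ 0 ≤ j₂ ∧ j₂ ≤ (m : ℤ) then
    Real.sqrt ((l.factorial * m.factorial : ℝ) / (l + m).factorial) *
      Real.sqrt ((j.toNat.factorial * ((l + m : ℤ) - j).toNat.factorial : ℝ) /
        (j₁.toNat.factorial * j₂.toNat.factorial * ((l : ℤ) - j₁).toNat.factorial *
          ((m : ℤ) - j₂).toNat.factorial))
  else 0

open Finset Nat

/- Squares of coefficients are ratios of factorials of integer expressions; keeping those
arguments in `ℤ` (instead of truncated subtraction in `ℕ`) lets `field_simp` cancel them as atoms. -/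
noncomputable def intFactorial (n : ℤ) : ℝ := (n.toNat)!

lemma intFactorial_pos (n : ℤ) : 0 < intFactorial n := by
  unfold intFactorial; positivity

lemma intFactorial_natCast (n : ℕ) : intFactorial n = n ! := by
  simp [intFactorial]

lemma choose_toNat_eq_intFactorial {n : ℕ} {b : ℤ} (hb₀ : 0 ≤ b) (hb : b ≤ n) :
    (n.choose b.toNat : ℝ) = intFactorial n / (intFactorial b * intFactorial (n - b)) := by
  rw [Nat.cast_choose ℝ (by omega), ← intFactorial_natCast, intFactorial, intFactorial,
    intFactorial]
  congr 4
  omega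

lemma CGhw_nonneg (l m : ℕ) (a b c : ℤ) : 0 ≤ CGhw l m a b c := by
  unfold CGhw; split_ifs <;> positivity

lemma CGhw_eq_zero {l m : ℕ} {a b c : ℤ} (h : ¬(0 ≤ a ∧ a ≤ l)) : CGhw l m a b c = 0 :=
  if_neg (by tauto)

lemma CGhw_sq {l m : ℕ} {a b c : ℤ} (habc : a + b = c) (ha₀ : 0 ≤ a) (ha : a ≤ l)
    (hb₀ : 0 ≤ b) (hb : b ≤ m) :
    CGhw l m a b c ^ 2 = intFactorial l * intFactorial m / intFactorial (l + m) *
      (intFactorial c * intFactorial (l + m - c)) /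
      (intFactorial a * intFactorial b * intFactorial (l - a) * intFactorial (m - b)) := by
  rw [CGhw, if_pos ⟨habc, ha₀, ha, hb₀, hb⟩, mul_pow, Real.sq_sqrt (by positivity),
    Real.sq_sqrt (by positivity), ← mul_div_assoc]
  simp only [intFactorial, Int.toNat_natCast]
  rfl

theorem CGhw_summand_eq {l m : ℕ} (hlm : m ≤ l) {i j s t : ℤ} (hs₀ : 0 ≤ s) (hs : s ≤ m)
    (hu₀ : 0 ≤ s + j - i) (hu : s + j - i ≤ m) (ht₀ : 0 ≤ t) (ht : t ≤ m) (htk : t ≤ i - s)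
    (hkt : i - s - t ≤ l - m) :
    CGhw l m (i - t) t i * CGhw l m (j - t) t j * CGhw (l - m) m (i - t - s) s (i - t) *
        CGhw (l - m) m (i - t - s) (s + j - i) (j - t) =
      CGhw l m (i - s) s i * CGhw l m (i - s) (s + j - i) j *
        ((m.choose t.toNat * (l - m).choose (i - s - t).toNat : ℕ) / l.choose (i - s).toNat) := by
  have hC := CGhw_nonneg
  refine (sq_eq_sq₀ (mul_nonneg (mul_nonneg (mul_nonneg (hC ..) (hC ..)) (hC ..)) (hC ..))
    (mul_nonneg (mul_nonneg (hC ..) (hC ..)) (by positivity))).mp ?_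
  simp only [mul_pow, div_pow]
  rw [CGhw_sq (by ring) (by omega) (by omega) ht₀ ht, CGhw_sq (by ring) (by omega) (by omega) ht₀ ht]
  rw [CGhw_sq (by ring) (by omega) (by omega) hs₀ hs, CGhw_sq (by ring) (by omega) (by omega) hu₀ hu]
  rw [CGhw_sq (by ring) (by omega) (by omega) hs₀ hs, CGhw_sq (by ring) (by omega) (by omega) hu₀ hu]
  push_cast [hlm]
  rw [choose_toNat_eq_intFactorial ht₀ ht, choose_toNat_eq_intFactorial (by omega) (by omega),
    choose_toNat_eq_intFactorial (by omega) (by omega)]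
  push_cast [hlm]
  simp only [sub_add_cancel, sub_right_comm _ t s]
  field_simp [(intFactorial_pos _).ne']

theorem sum_Icc_choose_mul_choose (m n : ℕ) {k : ℤ} (hk : 0 ≤ k) :
    ∑ t ∈ Icc (max 0 (k - n)) (min (m : ℤ) k), m.choose t.toNat * n.choose (k - t).toNat =
      (m + n).choose k.toNat := by
  lift k to ℕ using hk
  have hsub : Icc (max 0 ((k : ℤ) - n)) (min (m : ℤ) k) ⊆ Icc 0 (k : ℤ) := by
    intro t; simp only [mem_Icc]; omega
  rw [sum_subset hsub, Int.toNat_natCast, Nat.add_choose_eq,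
    Nat.sum_antidiagonal_eq_sum_range_succ_mk]
  · refine sum_nbij' Int.toNat Nat.cast ?_ ?_ ?_ ?_ ?_ <;> intro t ht <;>
      simp only [mem_Icc, mem_range] at ht ⊢ <;>
      first | omega | congr 2; omega
  · intro t ht hnt
    simp only [mem_Icc] at ht hnt
    rcases le_or_gt (t : ℤ) m with htm | htm
    · rw [Nat.choose_eq_zero_of_lt (n := n) (by omega), mul_zero]
    · rw [Nat.choose_eq_zero_of_lt (n := m) (by omega), zero_mul]

theorem stmt_14_general (l m : ℕ) (hlm : m ≤ l) (i j s₂ : ℤ)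
    (hs1 : max 0 (i - j) ≤ s₂) (hs2 : s₂ ≤ min (m : ℤ) ((m : ℤ) + i - j)) :
    ∑ i₂ ∈ Finset.Icc (max 0 (i - s₂ - l + m)) (min (m : ℤ) (i - s₂)),
      CGhw l m (i - i₂) i₂ i * CGhw l m (j - i₂) i₂ j *
        CGhw (l - m) m (i - i₂ - s₂) s₂ (i - i₂) *
        CGhw (l - m) m (i - i₂ - s₂) (s₂ + j - i) (j - i₂)
      = CGhw l m (i - s₂) s₂ i * CGhw l m (i - s₂) (s₂ + j - i) j := by
  by_cases hk : 0 ≤ i - s₂ ∧ i - s₂ ≤ l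
  · have hIcc : Icc (max 0 (i - s₂ - l + m)) (min (m : ℤ) (i - s₂)) =
        Icc (max 0 (i - s₂ - (l - m : ℕ))) (min (m : ℤ) (i - s₂)) := by
      congr 2; omega
    have hchoose : (l.choose (i - s₂).toNat : ℝ) ≠ 0 := by
      exact_mod_cast (Nat.choose_pos (by omega)).ne'
    rw [sum_congr rfl fun t ht ↦ by
        obtain ⟨ht₀, ht⟩ := mem_Icc.mp ht
        exact CGhw_summand_eq hlm (by omega) (by omega) (by omega) (by omega) (by omega) (by omega)
          (by omega) (by omega),
      ← mul_sum, ← sum_div, ← Nat.cast_sum, hIcc, sum_Icc_choose_mul_choose m (l - m) hk.1,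
      Nat.add_sub_cancel' hlm, div_self hchoose, mul_one]
  · rw [Icc_eq_empty (by omega), sum_empty, CGhw_eq_zero hk, zero_mul]

theorem stmt_14 (l m : ℕ) (hlm : m ≤ l) (i j s₂ : ℤ)
    (hi0 : 0 ≤ i) (hi1 : i ≤ (l : ℤ) + m) (hj0 : 0 ≤ j) (hj1 : j ≤ (l : ℤ) + m)
    (hs1 : max 0 (i - j) ≤ s₂) (hs2 : s₂ ≤ min (m : ℤ) ((m : ℤ) + i - j)) :
    ∑ i₂ ∈ Finset.Icc (max 0 (i - s₂ - l + m)) (min (m : ℤ) (i - s₂)),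
      CGhw l m (i - i₂) i₂ i * CGhw l m (j - i₂) i₂ j *
        CGhw (l - m) m (i - i₂ - s₂) s₂ (i - i₂) *
        CGhw (l - m) m (i - i₂ - s₂) (s₂ + j - i) (j - i₂)
      = CGhw l m (i - s₂) s₂ i * CGhw l m (i - s₂) (s₂ + j - i) j :=
  stmt_14_general l m hlm i j s₂ hs1 hs2
end
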